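/- arXiv:2307.12704 — 7 statements merged into one kernel-verified Lean document; each statement's English description precedes it below -/
import Mathlib

section
/- If a sequent ⊢Δ has a B-proof, then it has an atomically closed B-proof, i.e., a proof in which every occurrence of the init rule E⊢E involves only an atomic expression. -/
/-- Expressions of PSF: atoms, additive and multiplicative units and connectives. -/
inductive Expr (α : Type) : Type
  | atom : α → Expr α
  | zero : Expr α
  | one : Expr α
  | plus : Expr α → Expr α → Expr α
  | times : Expr α → Expr α → Expr α

/-- Rules of PSF: expressions extended with `↦` and `⇛`. -/
inductive Rule (α : Type) : Type
  | atom : α → Rule α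
  | zero : Rule α
  | one : Rule α
  | plus : Rule α → Rule α → Rule α
  | times : Rule α → Rule α → Rule α
  | mapsto : Rule α → Expr α → Rule α
  | bigMapsto : Rule α → Expr α → Rule α

/-- Every expression is a rule. -/
def Expr.toRule {α : Type} : Expr α → Rule α
  | .atom a => .atom a
  | .zero => .zero
  | .one => .one
  | .plus e1 e2 => .plus e1.toRule e2.toRule
  | .times e1 e2 => .times e1.toRule e2.toRule

/-- Elements of the right-hand side of a sequent: expressions and debts `Ā`. -/
inductive RElem (α : Type) : Type
  | expr : Expr α → RElem α
  | debt : α → RElem α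

/-- A bias assignment takes values in {-2,-1,+1,+2}. -/
def BiasOK {α : Type} (δ : α → ℤ) : Prop :=
  ∀ a, δ a = -2 ∨ δ a = -1 ∨ δ a = 1 ∨ δ a = 2

/-- An atom is in the classical realm if its bias is ±2. -/
def InClassical {α : Type} (δ : α → ℤ) (a : α) : Prop := δ a = 2 ∨ δ a = -2

/-- `Υ`: a multiset consisting only of classical-realm atoms. -/
def Ups {α : Type} (δ : α → ℤ) (Υ : Multiset (RElem α)) : Prop :=
  ∀ x ∈ Υ, ∃ a, x = RElem.expr (Expr.atom a) ∧ InClassical δ a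

/-- The basic proof system `B` of PSF, with sequents `Γ ⊢ Δ`,
parameterized by the fixed rule set `R` and the bias assignment `δ`. -/
inductive B {α : Type} (R : Set (Rule α)) (δ : α → ℤ) :
    Multiset (Rule α) → Multiset (RElem α) → Prop
  | rzero (Γ Δ) : B R δ Γ (.expr .zero ::ₘ Δ)
  | rplus {Γ Δ E1 E2} : B R δ Γ (.expr E1 ::ₘ Δ) → B R δ Γ (.expr E2 ::ₘ Δ) →
      B R δ Γ (.expr (E1.plus E2) ::ₘ Δ)
  | rone {Γ Δ} : B R δ Γ Δ → B R δ Γ (.expr .one ::ₘ Δ)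
  | rtimes {Γ Δ E1 E2} : B R δ Γ (.expr E1 ::ₘ .expr E2 ::ₘ Δ) →
      B R δ Γ (.expr (E1.times E2) ::ₘ Δ)
  | lone : B R δ {Rule.one} 0
  | lplusL {Γ Δ R1 R2} : B R δ (R1 ::ₘ Γ) Δ → B R δ (Rule.plus R1 R2 ::ₘ Γ) Δ
  | lplusR {Γ Δ R1 R2} : B R δ (R2 ::ₘ Γ) Δ → B R δ (Rule.plus R1 R2 ::ₘ Γ) Δ
  | ltimes {Γ1 Γ2 Δ1 Δ2 R1 R2} : B R δ (R1 ::ₘ Γ1) Δ1 → B R δ (R2 ::ₘ Γ2) Δ2 →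
      B R δ (Rule.times R1 R2 ::ₘ (Γ1 + Γ2)) (Δ1 + Δ2)
  | lmapsto {Γ1 Γ2 Δ1 Δ2 R1 E} : B R δ (R1 ::ₘ Γ1) Δ1 → B R δ Γ2 (.expr E ::ₘ Δ2) →
      B R δ (Rule.mapsto R1 E ::ₘ (Γ1 + Γ2)) (Δ1 + Δ2)
  | lbigMapsto {Γ Δ Υ R1 E} : Ups δ Υ → B R δ {R1} Υ → B R δ Γ (.expr E ::ₘ Δ) →
      B R δ (Rule.bigMapsto R1 E ::ₘ Γ) (Υ + Δ)
  | decide {Γ Δ} : Γ ≠ 0 → (∀ r ∈ Γ, r ∈ R) → B R δ Γ Δ → B R δ 0 Δ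
  | debit1 {Γ Δ A} : δ A = 1 → B R δ Γ (.debt A ::ₘ Δ) → B R δ (Rule.atom A ::ₘ Γ) Δ
  | debit2 {Υ A} : δ A = 2 → Ups δ Υ → B R δ 0 (.debt A ::ₘ Υ) → B R δ {Rule.atom A} Υ
  | init {E} : B R δ {E.toRule} {.expr E}
  | initd {A} : B R δ 0 {.debt A, .expr (.atom A)}
  | contrR {Γ Δ S} : InClassical δ S →
      B R δ Γ (.expr (.atom S) ::ₘ .expr (.atom S) ::ₘ Δ) →
      B R δ Γ (.expr (.atom S) ::ₘ Δ)
  | weakR {Γ Δ S} : InClassical δ S → B R δ Γ Δ → B R δ Γ (.expr (.atom S) ::ₘ Δ)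

/-- The variant of `B` in which the `init` rule is restricted to atomic
expressions: proofs in this system are the atomically closed `B`-proofs. -/
inductive Batom {α : Type} (R : Set (Rule α)) (δ : α → ℤ) :
    Multiset (Rule α) → Multiset (RElem α) → Prop
  | rzero (Γ Δ) : Batom R δ Γ (.expr .zero ::ₘ Δ)
  | rplus {Γ Δ E1 E2} : Batom R δ Γ (.expr E1 ::ₘ Δ) → Batom R δ Γ (.expr E2 ::ₘ Δ) →
      Batom R δ Γ (.expr (E1.plus E2) ::ₘ Δ)
  | rone {Γ Δ} : Batom R δ Γ Δ → Batom R δ Γ (.expr .one ::ₘ Δ)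
  | rtimes {Γ Δ E1 E2} : Batom R δ Γ (.expr E1 ::ₘ .expr E2 ::ₘ Δ) →
      Batom R δ Γ (.expr (E1.times E2) ::ₘ Δ)
  | lone : Batom R δ {Rule.one} 0
  | lplusL {Γ Δ R1 R2} : Batom R δ (R1 ::ₘ Γ) Δ → Batom R δ (Rule.plus R1 R2 ::ₘ Γ) Δ
  | lplusR {Γ Δ R1 R2} : Batom R δ (R2 ::ₘ Γ) Δ → Batom R δ (Rule.plus R1 R2 ::ₘ Γ) Δ
  | ltimes {Γ1 Γ2 Δ1 Δ2 R1 R2} : Batom R δ (R1 ::ₘ Γ1) Δ1 → Batom R δ (R2 ::ₘ Γ2) Δ2 →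
      Batom R δ (Rule.times R1 R2 ::ₘ (Γ1 + Γ2)) (Δ1 + Δ2)
  | lmapsto {Γ1 Γ2 Δ1 Δ2 R1 E} : Batom R δ (R1 ::ₘ Γ1) Δ1 → Batom R δ Γ2 (.expr E ::ₘ Δ2) →
      Batom R δ (Rule.mapsto R1 E ::ₘ (Γ1 + Γ2)) (Δ1 + Δ2)
  | lbigMapsto {Γ Δ Υ R1 E} : Ups δ Υ → Batom R δ {R1} Υ → Batom R δ Γ (.expr E ::ₘ Δ) →
      Batom R δ (Rule.bigMapsto R1 E ::ₘ Γ) (Υ + Δ)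
  | decide {Γ Δ} : Γ ≠ 0 → (∀ r ∈ Γ, r ∈ R) → Batom R δ Γ Δ → Batom R δ 0 Δ
  | debit1 {Γ Δ A} : δ A = 1 → Batom R δ Γ (.debt A ::ₘ Δ) → Batom R δ (Rule.atom A ::ₘ Γ) Δ
  | debit2 {Υ A} : δ A = 2 → Ups δ Υ → Batom R δ 0 (.debt A ::ₘ Υ) → Batom R δ {Rule.atom A} Υ
  | init {a : α} : Batom R δ {Rule.atom a} {.expr (.atom a)}
  | initd {A} : Batom R δ 0 {.debt A, .expr (.atom A)}
  | contrR {Γ Δ S} : InClassical δ S →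
      Batom R δ Γ (.expr (.atom S) ::ₘ .expr (.atom S) ::ₘ Δ) →
      Batom R δ Γ (.expr (.atom S) ::ₘ Δ)
  | weakR {Γ Δ S} : InClassical δ S → Batom R δ Γ Δ → Batom R δ Γ (.expr (.atom S) ::ₘ Δ)


/-! An identity axiom on a compound expression is η-expanded into identities on its atoms; every
other rule of `B` is also a rule of `Batom`. -/

section

variable {α : Type} {R : Set (Rule α)} {δ : α → ℤ}

theorem Batom.init_toRule (E : Expr α) : Batom R δ {E.toRule} {.expr E} := by
  induction E with
  | atom a => exact .init
  | zero => exact .rzero _ _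
  | one => exact .rone .lone
  | plus E1 E2 ih1 ih2 =>
    exact .rplus (.lplusL (Γ := 0) ih1) (.lplusR (Γ := 0) ih2)
  | times E1 E2 ih1 ih2 =>
    have h := Batom.ltimes (Γ1 := 0) (Γ2 := 0) ih1 ih2
    simp only [add_zero, Multiset.singleton_add] at h
    exact .rtimes h

theorem B.toBatom {Γ : Multiset (Rule α)} {Δ : Multiset (RElem α)} (h : B R δ Γ Δ) :
    Batom R δ Γ Δ := by
  induction h with
  | rzero Γ Δ => exact .rzero Γ Δ
  | rplus _ _ ih1 ih2 => exact .rplus ih1 ih2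
  | rone _ ih => exact .rone ih
  | rtimes _ ih => exact .rtimes ih
  | lone => exact .lone
  | lplusL _ ih => exact .lplusL ih
  | lplusR _ ih => exact .lplusR ih
  | ltimes _ _ ih1 ih2 => exact .ltimes ih1 ih2
  | lmapsto _ _ ih1 ih2 => exact .lmapsto ih1 ih2
  | lbigMapsto hΥ _ _ ih1 ih2 => exact .lbigMapsto hΥ ih1 ih2
  | decide hΓ hR _ ih => exact .decide hΓ hR ih
  | debit1 hA _ ih => exact .debit1 hA ih
  | debit2 hA hΥ _ ih => exact .debit2 hA hΥ ih
  | init => exact Batom.init_toRule _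
  | initd => exact .initd
  | contrR hS _ ih => exact .contrR hS ih
  | weakR hS _ ih => exact .weakR hS ih

end

theorem atomically_closed_complete_general {α : Type} (R : Set (Rule α)) (δ : α → ℤ)
    (Δ : Multiset (RElem α)) :
    B R δ 0 Δ → Batom R δ 0 Δ := B.toBatom

/-- Completeness of atomically closed `B`-proofs: if `⊢ Δ` has a `B`-proof,
then it has an atomically closed `B`-proof. -/
theorem atomically_closed_complete {α : Type} (R : Set (Rule α)) (δ : α → ℤ)
    (hδ : BiasOK δ) (Δ : Multiset (RElem α)) :
    B R δ 0 Δ → Batom R δ 0 Δ :=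
  atomically_closed_complete_general R δ Δ
end

section
/- The right rules of the B proof system are invertible: if E is a non-atomic expression and ⊢ E, Δ is B-provable, then there is a B-proof of ⊢ E, Δ whose last inference rule is the right introduction rule for the top connective of E. In particular: (a) if ⊢ E1×E2, Δ is provable then ⊢ E1, E2, Δ is provable; (b) if ⊢ E1+E2, Δ is provable then both ⊢ E1, Δ and ⊢ E2, Δ are provable; (c) if ⊢ 1, Δ is provable then ⊢ Δ is provable. -/
lemma swap3 {β : Type*} (a b c : β) (u : Multiset β) :
    a ::ₘ b ::ₘ c ::ₘ u = c ::ₘ a ::ₘ b ::ₘ u := by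
  rw [Multiset.cons_swap b c, Multiset.cons_swap a c]

lemma split_cons {β : Type*} {s t : Multiset β} {a : β} {u : Multiset β}
    (h : s + t = a ::ₘ u) :
    (∃ s', s = a ::ₘ s' ∧ u = s' + t) ∨ (∃ t', t = a ::ₘ t' ∧ u = s + t') := by
  have ha : a ∈ s + t := h ▸ Multiset.mem_cons_self a u
  rcases Multiset.mem_add.mp ha with hs | ht
  · obtain ⟨s', rfl⟩ := Multiset.exists_cons_of_mem hs
    left
    refine ⟨s', rfl, ?_⟩
    have : a ::ₘ (s' + t) = a ::ₘ u := by rw [← h, Multiset.cons_add]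
    exact ((Multiset.cons_inj_right a).mp this).symm
  · obtain ⟨t', rfl⟩ := Multiset.exists_cons_of_mem ht
    right
    refine ⟨t', rfl, ?_⟩
    have : a ::ₘ (s + t') = a ::ₘ u := by rw [← h, Multiset.add_cons]
    exact ((Multiset.cons_inj_right a).mp this).symm

lemma inv_gen {α : Type} {R : Set (Rule α)} {δ : α → ℤ} (C : Expr α)
    (Θ : Multiset (RElem α))
    (hatom : ∀ a, C ≠ .atom a) (hzero : C ≠ .zero)
    (hone : ∀ Γ Δ, C = .one → B R δ Γ Δ → B R δ Γ (Θ + Δ))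
    (hplus : ∀ F1 F2 Γ (Δ : Multiset (RElem α)), C = .plus F1 F2 →
      B R δ Γ (.expr F1 ::ₘ Δ) → B R δ Γ (.expr F2 ::ₘ Δ) → B R δ Γ (Θ + Δ))
    (htimes : ∀ F1 F2 Γ (Δ : Multiset (RElem α)), C = .times F1 F2 →
      B R δ Γ (.expr F1 ::ₘ .expr F2 ::ₘ Δ) → B R δ Γ (Θ + Δ))
    (hinit : B R δ {C.toRule} Θ) :
    ∀ {Γ Δ}, B R δ Γ Δ → ∀ Δ', Δ = .expr C ::ₘ Δ' → B R δ Γ (Θ + Δ') := by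
  intro Γ Δ h
  induction h with
  | rzero Γ Δ0 =>
      intro Δ' heq
      rcases Multiset.cons_eq_cons.mp heq with ⟨h1, _⟩ | ⟨_, u, hu1, hu2⟩
      · injection h1 with h1
        exact absurd h1.symm hzero
      · subst hu2
        rw [Multiset.add_cons]
        exact B.rzero _ _
  | rplus h1 h2 ih1 ih2 =>
      intro Δ' heq
      rcases Multiset.cons_eq_cons.mp heq with ⟨he, rfl⟩ | ⟨_, u, hu1, rfl⟩
      · injection he with he
        exact hplus _ _ _ _ he.symm h1 h2
      · have p1 := ih1 (_ ::ₘ u) (by rw [hu1, Multiset.cons_swap])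
        have p2 := ih2 (_ ::ₘ u) (by rw [hu1, Multiset.cons_swap])
        rw [Multiset.add_cons] at p1 p2 ⊢
        exact B.rplus p1 p2
  | rone h1 ih1 =>
      intro Δ' heq
      rcases Multiset.cons_eq_cons.mp heq with ⟨he, rfl⟩ | ⟨_, u, hu1, rfl⟩
      · injection he with he
        exact hone _ _ he.symm h1
      · have p1 := ih1 u hu1
        rw [Multiset.add_cons]
        exact B.rone p1
  | rtimes h1 ih1 =>
      intro Δ' heq
      rcases Multiset.cons_eq_cons.mp heq with ⟨he, rfl⟩ | ⟨_, u, hu1, rfl⟩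
      · injection he with he
        exact htimes _ _ _ _ he.symm h1
      · have p1 := ih1 (_ ::ₘ _ ::ₘ u)
          (by rw [hu1, swap3])
        rw [Multiset.add_cons, Multiset.add_cons] at p1
        rw [Multiset.add_cons]
        exact B.rtimes p1
  | lone =>
      intro Δ' heq
      exact absurd heq.symm (Multiset.cons_ne_zero)
  | lplusL h1 ih1 =>
      intro Δ' heq
      exact B.lplusL (ih1 Δ' heq)
  | lplusR h1 ih1 =>
      intro Δ' heq
      exact B.lplusR (ih1 Δ' heq)
  | ltimes h1 h2 ih1 ih2 =>
      intro Δ' heq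
      rcases split_cons heq with ⟨u, hu, rfl⟩ | ⟨u, hu, rfl⟩
      · have p1 := ih1 u hu
        have := B.ltimes p1 h2
        rwa [add_assoc] at this
      · have p2 := ih2 u hu
        have := B.ltimes h1 p2
        rwa [add_left_comm] at this
  | lmapsto h1 h2 ih1 ih2 =>
      intro Δ' heq
      rcases split_cons heq with ⟨u, hu, rfl⟩ | ⟨u, hu, rfl⟩
      · have p1 := ih1 u hu
        have := B.lmapsto p1 h2
        rwa [add_assoc] at this
      · have p2 := ih2 (_ ::ₘ u) (by rw [hu, Multiset.cons_swap])
        rw [Multiset.add_cons] at p2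
        have := B.lmapsto h1 p2
        rwa [add_left_comm] at this
  | lbigMapsto hU h1 h2 ih1 ih2 =>
      intro Δ' heq
      rcases split_cons heq with ⟨u, hu, rfl⟩ | ⟨u, hu, rfl⟩
      · have : RElem.expr C ∈ _ := hu ▸ Multiset.mem_cons_self (RElem.expr C) u
        obtain ⟨a, ha, _⟩ := hU _ this
        injection ha with ha
        exact absurd ha (hatom a)
      · have p2 := ih2 (_ ::ₘ u) (by rw [hu, Multiset.cons_swap])
        rw [Multiset.add_cons] at p2
        have := B.lbigMapsto hU h1 p2
        rwa [add_left_comm] at this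
  | decide hne hR h1 ih1 =>
      intro Δ' heq
      exact B.decide hne hR (ih1 Δ' heq)
  | debit1 hA h1 ih1 =>
      intro Δ' heq
      have p1 := ih1 (_ ::ₘ Δ') (by rw [heq, Multiset.cons_swap])
      rw [Multiset.add_cons] at p1
      exact B.debit1 hA p1
  | debit2 hA hU h1 ih1 =>
      intro Δ' heq
      have : RElem.expr C ∈ _ := heq ▸ Multiset.mem_cons_self (RElem.expr C) Δ'
      obtain ⟨a, ha, _⟩ := hU _ this
      injection ha with ha
      exact absurd ha (hatom a)
  | init =>
      intro Δ' heq
      rw [show ({RElem.expr _} : Multiset (RElem α)) = RElem.expr _ ::ₘ 0 from rfl] at heq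
      rcases Multiset.cons_eq_cons.mp heq with ⟨he, rfl⟩ | ⟨_, u, hu1, _⟩
      · injection he with he
        subst he
        simpa using hinit
      · exact absurd hu1.symm (Multiset.cons_ne_zero)
  | initd =>
      intro Δ' heq
      rw [show ({RElem.debt _, RElem.expr _} : Multiset (RElem α)) =
        RElem.debt _ ::ₘ RElem.expr _ ::ₘ 0 from rfl] at heq
      rcases Multiset.cons_eq_cons.mp heq with ⟨he, _⟩ | ⟨_, u, hu1, _⟩
      · exact absurd he (by simp)
      · rcases Multiset.cons_eq_cons.mp hu1 with ⟨he, _⟩ | ⟨_, v, hv1, _⟩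
        · injection he with he
          exact absurd he.symm (hatom _)
        · exact absurd hv1.symm (Multiset.cons_ne_zero)
  | contrR hS h1 ih1 =>
      intro Δ' heq
      rcases Multiset.cons_eq_cons.mp heq with ⟨he, rfl⟩ | ⟨_, u, hu1, rfl⟩
      · injection he with he
        exact absurd he.symm (hatom _)
      · have p1 := ih1 (_ ::ₘ _ ::ₘ u)
          (by rw [hu1, swap3])
        rw [Multiset.add_cons, Multiset.add_cons] at p1
        rw [Multiset.add_cons]
        exact B.contrR hS p1
  | weakR hS h1 ih1 =>
      intro Δ' heq
      rcases Multiset.cons_eq_cons.mp heq with ⟨he, rfl⟩ | ⟨_, u, hu1, rfl⟩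
      · injection he with he
        exact absurd he.symm (hatom _)
      · have p1 := ih1 u hu1
        rw [Multiset.add_cons]
        exact B.weakR hS p1

/-- The right rules of `B` are invertible: (a) if `⊢ E1×E2, Δ` is provable then
`⊢ E1, E2, Δ` is; (b) if `⊢ E1+E2, Δ` is provable then both `⊢ E1, Δ` and
`⊢ E2, Δ` are; (c) if `⊢ 1, Δ` is provable then `⊢ Δ` is. -/
theorem right_rules_invertible {α : Type} (R : Set (Rule α)) (δ : α → ℤ)
    (hδ : BiasOK δ) (Δ : Multiset (RElem α)) (E1 E2 : Expr α) :
    (B R δ 0 (RElem.expr (E1.times E2) ::ₘ Δ) →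
      B R δ 0 (RElem.expr E1 ::ₘ RElem.expr E2 ::ₘ Δ)) ∧
    (B R δ 0 (RElem.expr (E1.plus E2) ::ₘ Δ) →
      B R δ 0 (RElem.expr E1 ::ₘ Δ) ∧ B R δ 0 (RElem.expr E2 ::ₘ Δ)) ∧
    (B R δ 0 (RElem.expr Expr.one ::ₘ Δ) → B R δ 0 Δ) := by
  refine ⟨fun h => ?_, fun h => ⟨?_, ?_⟩, fun h => ?_⟩
  · have := inv_gen (E1.times E2) (RElem.expr E1 ::ₘ {RElem.expr E2})
      (by intro a hc; cases hc) (by intro hc; cases hc)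
      (by intro _ _ hc; cases hc)
      (by intro _ _ _ _ hc; cases hc)
      (by rintro F1 F2 Γ Δ0 ⟨⟩ hp; simpa using hp)
      (by
        have := B.ltimes (R := R) (δ := δ) (B.init (E := E1)) (B.init (E := E2))
        simpa [Expr.toRule, Multiset.singleton_add] using this)
      h Δ rfl
    simpa using this
  · exact (by
      have := inv_gen (E1.plus E2) ({RElem.expr E1})
        (by intro a hc; cases hc) (by intro hc; cases hc)
        (by intro _ _ hc; cases hc)
        (by rintro F1 F2 Γ Δ0 ⟨⟩ hp _; simpa using hp)
        (by intro _ _ _ _ hc; cases hc)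
        (by
          have := B.lplusL (R := R) (δ := δ) (Γ := 0) (R2 := E2.toRule)
            (B.init (E := E1))
          simpa [Expr.toRule] using this)
        h Δ rfl
      simpa using this)
  · exact (by
      have := inv_gen (E1.plus E2) ({RElem.expr E2})
        (by intro a hc; cases hc) (by intro hc; cases hc)
        (by intro _ _ hc; cases hc)
        (by rintro F1 F2 Γ Δ0 ⟨⟩ _ hp; simpa using hp)
        (by intro _ _ _ _ hc; cases hc)
        (by
          have := B.lplusR (R := R) (δ := δ) (Γ := 0) (R1 := E1.toRule)
            (B.init (E := E2))
          simpa [Expr.toRule] using this)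
        h Δ rfl
      simpa using this)
  · have := inv_gen Expr.one (0 : Multiset (RElem α))
      (by intro a hc; cases hc) (by intro hc; cases hc)
      (by intro _ _ _ hp; simpa using hp)
      (by intro _ _ _ _ hc; cases hc)
      (by intro _ _ _ _ hc; cases hc)
      (by exact B.lone)
      h Δ rfl
    simpa using this
end

section
/- Clipping out debt is admissible in B: (1) if C is an atom with bias +1 and both ⊢ Δ1, C and ⊢ Δ2, C̄ are B-provable, then ⊢ Δ1, Δ2 is B-provable; (2) if C is an atom with bias +2 and both ⊢ Δ, C and ⊢ Υ, C̄ are B-provable (Υ a multiset of classical-realm atoms), then ⊢ Δ, Υ is B-provable. -/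

theorem clip_aux {α : Type} {R : Set (Rule α)} {δ : α → ℤ} (C : α)
    {Γ : Multiset (Rule α)} {Δ' : Multiset (RElem α)} (h : B R δ Γ Δ') :
    ∀ Δ2 : Multiset (RElem α), Δ' = RElem.debt C ::ₘ Δ2 →
    ∀ Δ1 : Multiset (RElem α), B R δ 0 (RElem.expr (Expr.atom C) ::ₘ Δ1) →
    B R δ Γ (Δ1 + Δ2) := by
  induction h with
  | rzero Γ Δ =>
    intro Δ2 heq Δ1 h1
    rcases Multiset.cons_eq_cons.mp heq with ⟨h, _⟩ | ⟨_, cs, hΔ, hΔ2⟩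
    · exact absurd h (by simp)
    · subst hΔ2
      rw [Multiset.add_cons]
      exact B.rzero _ _
  | rplus p1 p2 ih1 ih2 =>
    intro Δ2 heq Δ1 h1
    rcases Multiset.cons_eq_cons.mp heq with ⟨h, _⟩ | ⟨_, cs, hΔ, hΔ2⟩
    · exact absurd h (by simp)
    · subst hΔ hΔ2
      have i1 := ih1 _ (Multiset.cons_swap _ _ _) Δ1 h1
      have i2 := ih2 _ (Multiset.cons_swap _ _ _) Δ1 h1
      rw [Multiset.add_cons] at i1 i2 ⊢
      exact B.rplus i1 i2
  | rone p ih =>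
    intro Δ2 heq Δ1 h1
    rcases Multiset.cons_eq_cons.mp heq with ⟨h, _⟩ | ⟨_, cs, hΔ, hΔ2⟩
    · exact absurd h (by simp)
    · subst hΔ hΔ2
      have i := ih _ rfl Δ1 h1
      rw [Multiset.add_cons]
      exact B.rone i
  | rtimes p ih =>
    intro Δ2 heq Δ1 h1
    rcases Multiset.cons_eq_cons.mp heq with ⟨h, _⟩ | ⟨_, cs, hΔ, hΔ2⟩
    · exact absurd h (by simp)
    · subst hΔ hΔ2
      have i := ih (_ ::ₘ _ ::ₘ cs) ((congrArg (_ ::ₘ ·) (Multiset.cons_swap _ _ _)).trans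
        (Multiset.cons_swap _ _ _)) Δ1 h1
      rw [Multiset.add_cons, Multiset.add_cons] at i
      rw [Multiset.add_cons]
      exact B.rtimes i
  | lone =>
    intro Δ2 heq Δ1 h1
    exact absurd heq (by simp)
  | lplusL p ih =>
    intro Δ2 heq Δ1 h1
    exact B.lplusL (ih _ heq Δ1 h1)
  | lplusR p ih =>
    intro Δ2 heq Δ1 h1
    exact B.lplusR (ih _ heq Δ1 h1)
  | ltimes p1 p2 ih1 ih2 =>
    rename_i Γ1 Γ2 Δa Δb R1 R2
    intro Δ2 heq Δ1 h1
    have hmem : RElem.debt C ∈ Δa + Δb := by rw [heq]; exact Multiset.mem_cons_self _ _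
    rcases Multiset.mem_add.mp hmem with hm | hm
    · obtain ⟨cs, hcs⟩ := Multiset.exists_cons_of_mem hm
      subst hcs
      have hΔ2 : Δ2 = cs + Δb := by
        have : RElem.debt C ::ₘ Δ2 = RElem.debt C ::ₘ (cs + Δb) := by
          rw [← heq, Multiset.cons_add]
        exact (Multiset.cons_inj_right _).mp this.symm |>.symm
      subst hΔ2
      have i1 := ih1 _ rfl Δ1 h1
      have := B.ltimes i1 p2
      rwa [add_assoc] at this
    · obtain ⟨cs, hcs⟩ := Multiset.exists_cons_of_mem hm
      subst hcs
      have hΔ2 : Δ2 = Δa + cs := by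
        have : RElem.debt C ::ₘ Δ2 = RElem.debt C ::ₘ (Δa + cs) := by
          rw [← heq, Multiset.add_cons]
        exact (Multiset.cons_inj_right _).mp this.symm |>.symm
      subst hΔ2
      have i2 := ih2 _ rfl Δ1 h1
      have := B.ltimes p1 i2
      rwa [add_left_comm] at this
  | lmapsto p1 p2 ih1 ih2 =>
    rename_i Γ1 Γ2 Δa Δb R1 E
    intro Δ2 heq Δ1 h1
    have hmem : RElem.debt C ∈ Δa + Δb := by rw [heq]; exact Multiset.mem_cons_self _ _
    rcases Multiset.mem_add.mp hmem with hm | hm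
    · obtain ⟨cs, hcs⟩ := Multiset.exists_cons_of_mem hm
      subst hcs
      have hΔ2 : Δ2 = cs + Δb := by
        have : RElem.debt C ::ₘ Δ2 = RElem.debt C ::ₘ (cs + Δb) := by
          rw [← heq, Multiset.cons_add]
        exact (Multiset.cons_inj_right _).mp this.symm |>.symm
      subst hΔ2
      have i1 := ih1 _ rfl Δ1 h1
      have := B.lmapsto i1 p2
      rwa [add_assoc] at this
    · obtain ⟨cs, hcs⟩ := Multiset.exists_cons_of_mem hm
      subst hcs
      have hΔ2 : Δ2 = Δa + cs := by
        have : RElem.debt C ::ₘ Δ2 = RElem.debt C ::ₘ (Δa + cs) := by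
          rw [← heq, Multiset.add_cons]
        exact (Multiset.cons_inj_right _).mp this.symm |>.symm
      subst hΔ2
      have i2 := ih2 _ (by rw [Multiset.cons_swap]) Δ1 h1
      rw [Multiset.add_cons] at i2
      have := B.lmapsto p1 i2
      rwa [add_left_comm] at this
  | lbigMapsto hU p1 p2 ih1 ih2 =>
    rename_i Γ Δ Υ R1 E
    intro Δ2 heq Δ1 h1
    have hmem : RElem.debt C ∈ Υ + Δ := by rw [heq]; exact Multiset.mem_cons_self _ _
    rcases Multiset.mem_add.mp hmem with hm | hm
    · obtain ⟨a, ha, _⟩ := hU _ hm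
      exact absurd ha (by simp)
    · obtain ⟨cs, hcs⟩ := Multiset.exists_cons_of_mem hm
      subst hcs
      have hΔ2 : Δ2 = Υ + cs := by
        have : RElem.debt C ::ₘ Δ2 = RElem.debt C ::ₘ (Υ + cs) := by
          rw [← heq, Multiset.add_cons]
        exact (Multiset.cons_inj_right _).mp this.symm |>.symm
      subst hΔ2
      have i2 := ih2 _ (by rw [Multiset.cons_swap]) Δ1 h1
      rw [Multiset.add_cons] at i2
      have := B.lbigMapsto hU p1 i2
      rwa [add_left_comm] at this
  | decide hne hsub p ih =>
    intro Δ2 heq Δ1 h1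
    exact B.decide hne hsub (ih _ heq Δ1 h1)
  | debit1 hA p ih =>
    intro Δ2 heq Δ1 h1
    subst heq
    have i := ih _ (Multiset.cons_swap _ _ _) Δ1 h1
    rw [Multiset.add_cons] at i
    exact B.debit1 hA i
  | debit2 hA hU p ih =>
    intro Δ2 heq Δ1 h1
    have hmem : RElem.debt C ∈ RElem.debt C ::ₘ Δ2 := Multiset.mem_cons_self _ _
    rw [← heq] at hmem
    obtain ⟨a, ha, _⟩ := hU _ hmem
    exact absurd ha (by simp)
  | init =>
    intro Δ2 heq Δ1 h1
    have hmem : RElem.debt C ∈ RElem.debt C ::ₘ Δ2 := Multiset.mem_cons_self _ _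
    rw [← heq] at hmem
    rw [Multiset.mem_singleton] at hmem
    exact absurd hmem (by simp)
  | initd =>
    rename_i A
    intro Δ2 heq Δ1 h1
    rcases Multiset.cons_eq_cons.mp heq.symm with ⟨h, hΔ2⟩ | ⟨_, cs, _, hx⟩
    · have hAC : C = A := by injection h
      subst hAC
      subst hΔ2
      have : Δ1 + ({RElem.expr (Expr.atom C)} : Multiset (RElem α)) =
          RElem.expr (Expr.atom C) ::ₘ Δ1 := by
        rw [← Multiset.cons_zero, Multiset.add_cons, add_zero]
      rw [this]
      exact h1
    · have : RElem.debt C ∈ ({RElem.expr (Expr.atom A)} : Multiset (RElem α)) := by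
        rw [hx]; exact Multiset.mem_cons_self _ _
      rw [Multiset.mem_singleton] at this
      exact absurd this (by simp)
  | contrR hS p ih =>
    intro Δ2 heq Δ1 h1
    rcases Multiset.cons_eq_cons.mp heq with ⟨h, _⟩ | ⟨_, cs, hΔ, hΔ2⟩
    · exact absurd h (by simp)
    · subst hΔ hΔ2
      have i := ih (_ ::ₘ _ ::ₘ cs) ((congrArg (_ ::ₘ ·) (Multiset.cons_swap _ _ _)).trans
        (Multiset.cons_swap _ _ _)) Δ1 h1
      rw [Multiset.add_cons, Multiset.add_cons] at i
      rw [Multiset.add_cons]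
      exact B.contrR hS i
  | weakR hS p ih =>
    intro Δ2 heq Δ1 h1
    rcases Multiset.cons_eq_cons.mp heq with ⟨h, _⟩ | ⟨_, cs, hΔ, hΔ2⟩
    · exact absurd h (by simp)
    · subst hΔ hΔ2
      have i := ih _ rfl Δ1 h1
      rw [Multiset.add_cons]
      exact B.weakR hS i

/-- Clipping out debt is admissible in `B`: (1) for an atom `C` of bias `+1`,
from `⊢ Δ1, C` and `⊢ Δ2, C̄` infer `⊢ Δ1, Δ2`; (2) for an atom `C` of bias
`+2`, from `⊢ Δ, C` and `⊢ Υ, C̄` (with `Υ` classical-realm atoms) infer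
`⊢ Δ, Υ`. -/
theorem debt_clip_admissible {α : Type} (R : Set (Rule α)) (δ : α → ℤ)
    (hδ : BiasOK δ) (C : α) :
    (δ C = 1 → ∀ Δ1 Δ2 : Multiset (RElem α),
      B R δ 0 (RElem.expr (Expr.atom C) ::ₘ Δ1) →
      B R δ 0 (RElem.debt C ::ₘ Δ2) →
      B R δ 0 (Δ1 + Δ2)) ∧
    (δ C = 2 → ∀ (Δ Υ : Multiset (RElem α)), Ups δ Υ →
      B R δ 0 (RElem.expr (Expr.atom C) ::ₘ Δ) →
      B R δ 0 (RElem.debt C ::ₘ Υ) →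
      B R δ 0 (Δ + Υ)) := by
  constructor
  · intro _ Δ1 Δ2 h1 h2
    exact clip_aux C h2 Δ2 rfl Δ1 h1
  · intro _ Δ Υ _ h1 h2
    exact clip_aux C h2 Υ rfl Δ h1
end

section
/- Completeness of reduced proofs: if ⊢ Δ has a B-proof, then it has a reduced B-proof, i.e., one in which every occurrence of the decide rule has a right-hand side containing only atomic expressions and debts. -/
/-- `Δ` contains only atomic expressions and debts. -/
def AtomsDebts {α : Type} (Δ : Multiset (RElem α)) : Prop :=
  ∀ x ∈ Δ, (∃ a, x = RElem.expr (Expr.atom a)) ∨ (∃ a, x = RElem.debt a)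

/-- The variant of `B` capturing reduced proofs: every occurrence of the
`decide` rule has a right-hand side containing only atoms and debts. -/
inductive Bred {α : Type} (R : Set (Rule α)) (δ : α → ℤ) :
    Multiset (Rule α) → Multiset (RElem α) → Prop
  | rzero (Γ Δ) : Bred R δ Γ (.expr .zero ::ₘ Δ)
  | rplus {Γ Δ E1 E2} : Bred R δ Γ (.expr E1 ::ₘ Δ) → Bred R δ Γ (.expr E2 ::ₘ Δ) →
      Bred R δ Γ (.expr (E1.plus E2) ::ₘ Δ)
  | rone {Γ Δ} : Bred R δ Γ Δ → Bred R δ Γ (.expr .one ::ₘ Δ)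
  | rtimes {Γ Δ E1 E2} : Bred R δ Γ (.expr E1 ::ₘ .expr E2 ::ₘ Δ) →
      Bred R δ Γ (.expr (E1.times E2) ::ₘ Δ)
  | lone : Bred R δ {Rule.one} 0
  | lplusL {Γ Δ R1 R2} : Bred R δ (R1 ::ₘ Γ) Δ → Bred R δ (Rule.plus R1 R2 ::ₘ Γ) Δ
  | lplusR {Γ Δ R1 R2} : Bred R δ (R2 ::ₘ Γ) Δ → Bred R δ (Rule.plus R1 R2 ::ₘ Γ) Δ
  | ltimes {Γ1 Γ2 Δ1 Δ2 R1 R2} : Bred R δ (R1 ::ₘ Γ1) Δ1 → Bred R δ (R2 ::ₘ Γ2) Δ2 →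
      Bred R δ (Rule.times R1 R2 ::ₘ (Γ1 + Γ2)) (Δ1 + Δ2)
  | lmapsto {Γ1 Γ2 Δ1 Δ2 R1 E} : Bred R δ (R1 ::ₘ Γ1) Δ1 → Bred R δ Γ2 (.expr E ::ₘ Δ2) →
      Bred R δ (Rule.mapsto R1 E ::ₘ (Γ1 + Γ2)) (Δ1 + Δ2)
  | lbigMapsto {Γ Δ Υ R1 E} : Ups δ Υ → Bred R δ {R1} Υ → Bred R δ Γ (.expr E ::ₘ Δ) →
      Bred R δ (Rule.bigMapsto R1 E ::ₘ Γ) (Υ + Δ)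
  | decide {Γ Δ} : Γ ≠ 0 → (∀ r ∈ Γ, r ∈ R) → AtomsDebts Δ →
      Bred R δ Γ Δ → Bred R δ 0 Δ
  | debit1 {Γ Δ A} : δ A = 1 → Bred R δ Γ (.debt A ::ₘ Δ) → Bred R δ (Rule.atom A ::ₘ Γ) Δ
  | debit2 {Υ A} : δ A = 2 → Ups δ Υ → Bred R δ 0 (.debt A ::ₘ Υ) → Bred R δ {Rule.atom A} Υ
  | init {E} : Bred R δ {E.toRule} {.expr E}
  | initd {A} : Bred R δ 0 {.debt A, .expr (.atom A)}
  | contrR {Γ Δ S} : InClassical δ S →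
      Bred R δ Γ (.expr (.atom S) ::ₘ .expr (.atom S) ::ₘ Δ) →
      Bred R δ Γ (.expr (.atom S) ::ₘ Δ)
  | weakR {Γ Δ S} : InClassical δ S → Bred R δ Γ Δ → Bred R δ Γ (.expr (.atom S) ::ₘ Δ)


namespace RedAux

open Multiset

variable {α : Type}

/-- Right-rule inversion data: `Inv E Θ` means replacing `expr E` by `Θ` on the
right is a sound inversion. -/
inductive Inv : Expr α → Multiset (RElem α) → Prop
  | one : Inv .one 0
  | plusL {E1 E2} : Inv (.plus E1 E2) {.expr E1}
  | plusR {E1 E2} : Inv (.plus E1 E2) {.expr E2}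
  | times {E1 E2} : Inv (.times E1 E2) {.expr E1, .expr E2}

lemma Inv.not_atom {a : α} {Θ} (h : Inv (Expr.atom a) Θ) : False := by cases h

lemma split_add {β : Type} {Δ1 Δ2 Δ : Multiset β} {c : β} (h : Δ1 + Δ2 = c ::ₘ Δ) :
    (∃ Δ1', Δ1 = c ::ₘ Δ1' ∧ Δ = Δ1' + Δ2) ∨ (∃ Δ2', Δ2 = c ::ₘ Δ2' ∧ Δ = Δ1 + Δ2') := by
  have hc : c ∈ Δ1 + Δ2 := by rw [h]; exact Multiset.mem_cons_self _ _
  rcases Multiset.mem_add.mp hc with hc | hc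
  · obtain ⟨t, rfl⟩ := Multiset.exists_cons_of_mem hc
    left; refine ⟨t, rfl, ?_⟩
    rw [Multiset.cons_add] at h
    exact ((Multiset.cons_inj_right _).mp h).symm
  · obtain ⟨t, rfl⟩ := Multiset.exists_cons_of_mem hc
    right; refine ⟨t, rfl, ?_⟩
    rw [Multiset.add_cons] at h
    exact ((Multiset.cons_inj_right _).mp h).symm

lemma mem_ups_atom {δ : α → ℤ} {Υ : Multiset (RElem α)} (hU : Ups δ Υ)
    {E : Expr α} (h : RElem.expr E ∈ Υ) : ∃ a, E = Expr.atom a := by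
  obtain ⟨a, ha, -⟩ := hU _ h
  exact ⟨a, by injection ha⟩

/-- Inversion of right rules in `Bred`. -/
lemma inv_aux {R : Set (Rule α)} {δ : α → ℤ} {Γ Δ0} (h : Bred R δ Γ Δ0) :
    ∀ {E Θ Δ}, Inv E Θ → Δ0 = .expr E ::ₘ Δ → Bred R δ Γ (Θ + Δ) := by
  induction h with
  | rzero Γ Δ' =>
    intro E Θ Δ hI hEq
    rcases Multiset.cons_eq_cons.mp hEq with ⟨h1, h2⟩ | ⟨hne, u, h1, h2⟩
    · injection h1 with h1; subst h1; exact absurd hI (by intro hI; cases hI)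
    · subst h2; rw [Multiset.add_cons]; exact Bred.rzero _ _
  | rplus p1 p2 ih1 ih2 =>
    intro E Θ Δ hI hEq
    rcases Multiset.cons_eq_cons.mp hEq with ⟨h1, h2⟩ | ⟨hne, u, h1, h2⟩
    · injection h1 with h1; subst h2
      cases hI <;> cases h1
      · rw [Multiset.singleton_add]; exact p1
      · rw [Multiset.singleton_add]; exact p2
    · subst h1; subst h2
      have q1 := ih1 hI (Multiset.cons_swap _ _ _)
      have q2 := ih2 hI (Multiset.cons_swap _ _ _)
      rw [Multiset.add_cons] at q1 q2
      rw [Multiset.add_cons]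
      exact Bred.rplus q1 q2
  | rone p ih =>
    intro E Θ Δ hI hEq
    rcases Multiset.cons_eq_cons.mp hEq with ⟨h1, h2⟩ | ⟨hne, u, h1, h2⟩
    · injection h1 with h1; subst h2
      cases hI <;> cases h1
      simpa using p
    · subst h1; subst h2
      have q := ih hI rfl
      rw [Multiset.add_cons]
      exact Bred.rone q
  | rtimes p ih =>
    rename_i E1 E2
    intro E Θ Δ hI hEq
    rcases Multiset.cons_eq_cons.mp hEq with ⟨h1, h2⟩ | ⟨hne, u, h1, h2⟩
    · injection h1 with h1; subst h2
      cases hI <;> cases h1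
      simpa [Multiset.insert_eq_cons, Multiset.cons_add] using p
    · subst h1; subst h2
      have heq : (RElem.expr E1 ::ₘ RElem.expr E2 ::ₘ RElem.expr E ::ₘ u)
          = RElem.expr E ::ₘ RElem.expr E1 ::ₘ RElem.expr E2 ::ₘ u := by
        rw [Multiset.cons_swap (RElem.expr E2) (RElem.expr E) u,
          Multiset.cons_swap (RElem.expr E1) (RElem.expr E)]
      have q := ih hI heq
      rw [Multiset.add_cons, Multiset.add_cons] at q
      rw [Multiset.add_cons]
      exact Bred.rtimes q
  | lone =>
    intro E Θ Δ hI hEq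
    exact absurd hEq.symm (Multiset.cons_ne_zero)
  | lplusL p ih =>
    intro E Θ Δ hI hEq
    exact Bred.lplusL (ih hI hEq)
  | lplusR p ih =>
    intro E Θ Δ hI hEq
    exact Bred.lplusR (ih hI hEq)
  | ltimes p1 p2 ih1 ih2 =>
    intro E Θ Δ hI hEq
    rcases split_add hEq with ⟨Δ1', rfl, rfl⟩ | ⟨Δ2', rfl, rfl⟩
    · have q := ih1 hI rfl
      have := Bred.ltimes q p2
      rw [add_assoc] at this
      exact this
    · have q := ih2 hI rfl
      have := Bred.ltimes p1 q
      rw [← add_assoc, add_comm _ Θ, add_assoc] at this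
      exact this
  | lmapsto p1 p2 ih1 ih2 =>
    intro E Θ Δ hI hEq
    rcases split_add hEq with ⟨Δ1', rfl, rfl⟩ | ⟨Δ2', rfl, rfl⟩
    · have q := ih1 hI rfl
      have := Bred.lmapsto q p2
      rw [add_assoc] at this
      exact this
    · have q := ih2 hI (Multiset.cons_swap _ _ _)
      rw [Multiset.add_cons] at q
      have := Bred.lmapsto p1 q
      rw [← add_assoc, add_comm _ Θ, add_assoc] at this
      exact this
  | lbigMapsto hU p1 p2 ih1 ih2 =>
    intro E Θ Δ hI hEq
    rcases split_add hEq with ⟨Υ', rfl, rfl⟩ | ⟨Δ2', rfl, rfl⟩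
    · obtain ⟨a, rfl⟩ := mem_ups_atom hU (Multiset.mem_cons_self _ _)
      exact absurd hI Inv.not_atom
    · have q := ih2 hI (Multiset.cons_swap _ _ _)
      rw [Multiset.add_cons] at q
      have := Bred.lbigMapsto hU p1 q
      rw [← add_assoc, add_comm _ Θ, add_assoc] at this
      exact this
  | decide hne hR hAD p ih =>
    intro E Θ Δ hI hEq
    subst hEq
    rcases hAD _ (Multiset.mem_cons_self _ _) with ⟨a, ha⟩ | ⟨a, ha⟩
    · injection ha with ha; subst ha; exact absurd hI Inv.not_atom
    · exact absurd ha (by simp)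
  | debit1 hA p ih =>
    intro E Θ Δ hI hEq
    subst hEq
    have q := ih hI (Multiset.cons_swap _ _ _)
    rw [Multiset.add_cons] at q
    exact Bred.debit1 hA q
  | debit2 hA hU p ih =>
    intro E Θ Δ hI hEq
    have : RElem.expr E ∈ _ := hEq ▸ Multiset.mem_cons_self (RElem.expr E) Δ
    obtain ⟨a, rfl⟩ := mem_ups_atom hU this
    exact absurd hI Inv.not_atom
  | init =>
    intro E Θ Δ hI hEq
    rcases Multiset.cons_eq_cons.mp hEq with ⟨h1, h2⟩ | ⟨hne, u, h1, h2⟩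
    · injection h1 with h1; subst h1; subst h2
      cases hI
      · simpa [Expr.toRule] using Bred.lone
      · rw [add_zero]
        exact Bred.lplusL Bred.init
      · rw [add_zero]
        exact Bred.lplusR Bred.init
      · rw [add_zero]
        rename_i E1 E2
        have := Bred.ltimes (R := R) (δ := δ) (Γ1 := 0) (Γ2 := 0)
          (Δ1 := {RElem.expr E1}) (Δ2 := {RElem.expr E2})
          (R1 := E1.toRule) (R2 := E2.toRule) Bred.init Bred.init
        simpa [Expr.toRule, Multiset.insert_eq_cons, Multiset.singleton_add] using this
    · exact absurd h1.symm (Multiset.cons_ne_zero)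
  | initd =>
    intro E Θ Δ hI hEq
    have : RElem.expr E ∈ ({.debt _, .expr (.atom _)} : Multiset (RElem α)) :=
      hEq ▸ Multiset.mem_cons_self (RElem.expr E) Δ
    simp only [Multiset.insert_eq_cons, Multiset.mem_cons, Multiset.mem_singleton] at this
    rcases this with h | h
    · exact absurd h (by simp)
    · injection h with h; subst h; exact absurd hI Inv.not_atom
  | contrR hS p ih =>
    rename_i S
    intro E Θ Δ hI hEq
    rcases Multiset.cons_eq_cons.mp hEq with ⟨h1, h2⟩ | ⟨hne, u, h1, h2⟩
    · injection h1 with h1; subst h1; exact absurd hI Inv.not_atom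
    · subst h1; subst h2
      have heq : (RElem.expr (.atom S) ::ₘ RElem.expr (.atom S) ::ₘ RElem.expr E ::ₘ u)
          = RElem.expr E ::ₘ RElem.expr (.atom S) ::ₘ RElem.expr (.atom S) ::ₘ u := by
        rw [Multiset.cons_swap (RElem.expr (.atom S)) (RElem.expr E) u,
          Multiset.cons_swap (RElem.expr (.atom S)) (RElem.expr E)]
      have q := ih hI heq
      rw [Multiset.add_cons, Multiset.add_cons] at q
      rw [Multiset.add_cons]
      exact Bred.contrR hS q
  | weakR hS p ih =>
    intro E Θ Δ hI hEq
    rcases Multiset.cons_eq_cons.mp hEq with ⟨h1, h2⟩ | ⟨hne, u, h1, h2⟩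
    · injection h1 with h1; subst h1; exact absurd hI Inv.not_atom
    · subst h1; subst h2
      have q := ih hI rfl
      rw [Multiset.add_cons]
      exact Bred.weakR hS q

/-- Size of an expression: number of non-atomic constructors. -/
def esz : Expr α → ℕ
  | .atom _ => 0
  | .zero => 1
  | .one => 1
  | .plus a b => esz a + esz b + 1
  | .times a b => esz a + esz b + 1

def rsz : RElem α → ℕ
  | .expr e => esz e
  | .debt _ => 0

def wt (Δ : Multiset (RElem α)) : ℕ := (Δ.map rsz).sum

@[simp] lemma wt_cons (x : RElem α) (Δ : Multiset (RElem α)) :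
    wt (x ::ₘ Δ) = rsz x + wt Δ := by
  simp [wt]

lemma atomsDebts_of_wt_zero {Δ : Multiset (RElem α)} (h : wt Δ = 0) : AtomsDebts Δ := by
  intro x hx
  have hx0 : rsz x = 0 := by
    have := Multiset.sum_eq_zero_iff.mp h (rsz x) (Multiset.mem_map_of_mem _ hx)
    exact this
  cases x with
  | debt a => exact Or.inr ⟨a, rfl⟩
  | expr e =>
    cases e with
    | atom a => exact Or.inl ⟨a, rfl⟩
    | zero => simp [rsz, esz] at hx0
    | one => simp [rsz, esz] at hx0
    | plus a b => simp [rsz, esz] at hx0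
    | times a b => simp [rsz, esz] at hx0

/-- Admissibility of unrestricted decide in `Bred`. -/
lemma decide_adm {R : Set (Rule α)} {δ : α → ℤ} :
    ∀ n (Δ : Multiset (RElem α)) (Γ : Multiset (Rule α)), wt Δ ≤ n → Γ ≠ 0 →
      (∀ r ∈ Γ, r ∈ R) → Bred R δ Γ Δ → Bred R δ 0 Δ := by
  intro n
  induction n using Nat.strong_induction_on with
  | _ n IH =>
  intro Δ Γ hw hne hR h
  by_cases h0 : wt Δ = 0
  · exact Bred.decide hne hR (atomsDebts_of_wt_zero h0) h
  · have : ∃ x ∈ Δ, rsz x ≠ 0 := by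
      by_contra hc
      push_neg at hc
      exact h0 (Multiset.sum_eq_zero_iff.mpr (by
        intro y hy
        obtain ⟨x, hx, rfl⟩ := Multiset.mem_map.mp hy
        exact hc x hx))
    obtain ⟨x, hx, hxs⟩ := this
    obtain ⟨Δ', rfl⟩ := Multiset.exists_cons_of_mem hx
    cases x with
    | debt a => simp [rsz] at hxs
    | expr e =>
      cases e with
      | atom a => simp [rsz, esz] at hxs
      | zero => exact Bred.rzero _ _
      | one =>
        have q := inv_aux h Inv.one rfl
        rw [zero_add] at q
        have hwt : wt (RElem.expr Expr.one ::ₘ Δ') = 1 + wt Δ' := by simp [rsz, esz]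
        rw [hwt] at hw
        have hlt : wt Δ' < n := by omega
        exact Bred.rone (IH _ hlt _ _ le_rfl hne hR q)
      | plus E1 E2 =>
        have q1 := inv_aux h Inv.plusL rfl
        have q2 := inv_aux h Inv.plusR rfl
        rw [Multiset.singleton_add] at q1 q2
        have hwt : wt (RElem.expr (E1.plus E2) ::ₘ Δ') = esz E1 + esz E2 + 1 + wt Δ' := by
          simp [rsz, esz]
        rw [hwt] at hw
        have h1 : wt (RElem.expr E1 ::ₘ Δ') = esz E1 + wt Δ' := by simp [rsz]
        have h2 : wt (RElem.expr E2 ::ₘ Δ') = esz E2 + wt Δ' := by simp [rsz]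
        have hlt1 : wt (RElem.expr E1 ::ₘ Δ') < n := by omega
        have hlt2 : wt (RElem.expr E2 ::ₘ Δ') < n := by omega
        exact Bred.rplus (IH _ hlt1 _ _ le_rfl hne hR q1) (IH _ hlt2 _ _ le_rfl hne hR q2)
      | times E1 E2 =>
        have q := inv_aux h Inv.times rfl
        rw [Multiset.insert_eq_cons, Multiset.cons_add, Multiset.singleton_add] at q
        have hwt : wt (RElem.expr (E1.times E2) ::ₘ Δ') = esz E1 + esz E2 + 1 + wt Δ' := by
          simp [rsz, esz]
        rw [hwt] at hw
        have h1 : wt (RElem.expr E1 ::ₘ RElem.expr E2 ::ₘ Δ') = esz E1 + (esz E2 + wt Δ') := by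
          simp [rsz]
        have hlt : wt (RElem.expr E1 ::ₘ RElem.expr E2 ::ₘ Δ') < n := by omega
        exact Bred.rtimes (IH _ hlt _ _ le_rfl hne hR q)

lemma toBred {R : Set (Rule α)} {δ : α → ℤ} {Γ Δ} (h : B R δ Γ Δ) : Bred R δ Γ Δ := by
  induction h with
  | rzero Γ Δ => exact Bred.rzero Γ Δ
  | rplus _ _ ih1 ih2 => exact Bred.rplus ih1 ih2
  | rone _ ih => exact Bred.rone ih
  | rtimes _ ih => exact Bred.rtimes ih
  | lone => exact Bred.lone
  | lplusL _ ih => exact Bred.lplusL ih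
  | lplusR _ ih => exact Bred.lplusR ih
  | ltimes _ _ ih1 ih2 => exact Bred.ltimes ih1 ih2
  | lmapsto _ _ ih1 ih2 => exact Bred.lmapsto ih1 ih2
  | lbigMapsto hU _ _ ih1 ih2 => exact Bred.lbigMapsto hU ih1 ih2
  | decide hne hR _ ih => exact decide_adm _ _ _ le_rfl hne hR ih
  | debit1 hA _ ih => exact Bred.debit1 hA ih
  | debit2 hA hU _ ih => exact Bred.debit2 hA hU ih
  | init => exact Bred.init
  | initd => exact Bred.initd
  | contrR hS _ ih => exact Bred.contrR hS ih
  | weakR hS _ ih => exact Bred.weakR hS ih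

end RedAux

/-- Completeness of reduced `B`-proofs: if `⊢ Δ` has a `B`-proof then it has a
reduced `B`-proof. -/
theorem complete_reduced {α : Type} (R : Set (Rule α)) (δ : α → ℤ)
    (hδ : BiasOK δ) (Δ : Multiset (RElem α)) :
    B R δ 0 Δ → Bred R δ 0 Δ := by
  exact RedAux.toBred
end

section
/- Completeness of single-decide proofs: if ⊢ Δ has a B-proof, then it has a B-proof in which every occurrence of the decide rule moves exactly one rule-expression from the rule set ℛ to the left-hand side. -/
/-- The variant of `B` in which every occurrence of the `decide` rule moves
exactly one rule-expression from `R` to the left-hand side. -/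
inductive Bsd {α : Type} (R : Set (Rule α)) (δ : α → ℤ) :
    Multiset (Rule α) → Multiset (RElem α) → Prop
  | rzero (Γ Δ) : Bsd R δ Γ (.expr .zero ::ₘ Δ)
  | rplus {Γ Δ E1 E2} : Bsd R δ Γ (.expr E1 ::ₘ Δ) → Bsd R δ Γ (.expr E2 ::ₘ Δ) →
      Bsd R δ Γ (.expr (E1.plus E2) ::ₘ Δ)
  | rone {Γ Δ} : Bsd R δ Γ Δ → Bsd R δ Γ (.expr .one ::ₘ Δ)
  | rtimes {Γ Δ E1 E2} : Bsd R δ Γ (.expr E1 ::ₘ .expr E2 ::ₘ Δ) →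
      Bsd R δ Γ (.expr (E1.times E2) ::ₘ Δ)
  | lone : Bsd R δ {Rule.one} 0
  | lplusL {Γ Δ R1 R2} : Bsd R δ (R1 ::ₘ Γ) Δ → Bsd R δ (Rule.plus R1 R2 ::ₘ Γ) Δ
  | lplusR {Γ Δ R1 R2} : Bsd R δ (R2 ::ₘ Γ) Δ → Bsd R δ (Rule.plus R1 R2 ::ₘ Γ) Δ
  | ltimes {Γ1 Γ2 Δ1 Δ2 R1 R2} : Bsd R δ (R1 ::ₘ Γ1) Δ1 → Bsd R δ (R2 ::ₘ Γ2) Δ2 →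
      Bsd R δ (Rule.times R1 R2 ::ₘ (Γ1 + Γ2)) (Δ1 + Δ2)
  | lmapsto {Γ1 Γ2 Δ1 Δ2 R1 E} : Bsd R δ (R1 ::ₘ Γ1) Δ1 → Bsd R δ Γ2 (.expr E ::ₘ Δ2) →
      Bsd R δ (Rule.mapsto R1 E ::ₘ (Γ1 + Γ2)) (Δ1 + Δ2)
  | lbigMapsto {Γ Δ Υ R1 E} : Ups δ Υ → Bsd R δ {R1} Υ → Bsd R δ Γ (.expr E ::ₘ Δ) →
      Bsd R δ (Rule.bigMapsto R1 E ::ₘ Γ) (Υ + Δ)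
  | decide {r Δ} : r ∈ R → Bsd R δ {r} Δ → Bsd R δ 0 Δ
  | debit1 {Γ Δ A} : δ A = 1 → Bsd R δ Γ (.debt A ::ₘ Δ) → Bsd R δ (Rule.atom A ::ₘ Γ) Δ
  | debit2 {Υ A} : δ A = 2 → Ups δ Υ → Bsd R δ 0 (.debt A ::ₘ Υ) → Bsd R δ {Rule.atom A} Υ
  | init {E} : Bsd R δ {E.toRule} {.expr E}
  | initd {A} : Bsd R δ 0 {.debt A, .expr (.atom A)}
  | contrR {Γ Δ S} : InClassical δ S →
      Bsd R δ Γ (.expr (.atom S) ::ₘ .expr (.atom S) ::ₘ Δ) →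
      Bsd R δ Γ (.expr (.atom S) ::ₘ Δ)
  | weakR {Γ Δ S} : InClassical δ S → Bsd R δ Γ Δ → Bsd R δ Γ (.expr (.atom S) ::ₘ Δ)


/-! ### Auxiliary machinery for single-decide completeness -/

section SingleDecide

variable {α : Type}

/-- Riesz decomposition for multisets. -/
lemma mset_riesz {β : Type} :
    ∀ {c : Multiset β} {a b d : Multiset β}, a + b = c + d →
      ∃ w x y z, a = w + x ∧ b = y + z ∧ c = w + y ∧ d = x + z := by
  intro c
  induction c using Multiset.induction with
  | empty =>
      intro a b d h
      refine ⟨0, a, 0, b, by simp, by simp, by simp, ?_⟩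
      simpa using h.symm
  | cons e c' ih =>
      intro a b d h
      have he : e ∈ a + b := by
        rw [h, Multiset.cons_add]
        exact Multiset.mem_cons_self e _
      rcases Multiset.mem_add.mp he with hA | hB
      · obtain ⟨a', rfl⟩ := Multiset.exists_cons_of_mem hA
        have h' : a' + b = c' + d := by
          have h2 : e ::ₘ (a' + b) = e ::ₘ (c' + d) := by
            rw [← Multiset.cons_add, h, Multiset.cons_add]
          exact (Multiset.cons_inj_right e).mp h2
        obtain ⟨w, x, y, z, h1, h2, h3, h4⟩ := ih h'
        exact ⟨e ::ₘ w, x, y, z, by rw [h1, Multiset.cons_add], h2,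
          by rw [h3, Multiset.cons_add], h4⟩
      · obtain ⟨b', rfl⟩ := Multiset.exists_cons_of_mem hB
        have h2 : {e} + (a + b') = {e} + (c' + d) := by
          simp only [← Multiset.singleton_add] at h
          calc {e} + (a + b') = a + ({e} + b') := by abel
            _ = {e} + c' + d := h
            _ = {e} + (c' + d) := by abel
        have h' : a + b' = c' + d := add_left_cancel h2
        obtain ⟨w, x, y, z, h1, h2', h3, h4⟩ := ih h'
        refine ⟨w, x, e ::ₘ y, z, h1, ?_, ?_, h4⟩
        · rw [h2']
          simp only [← Multiset.singleton_add]
          abel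
        · rw [h3]
          simp only [← Multiset.singleton_add]
          abel

/-- Splitting a multiset equation `x ::ₘ Γ = A + Ω`. -/
lemma mset_cons_split {β : Type} {x : β} {Γ A Ω : Multiset β} (h : x ::ₘ Γ = A + Ω) :
    (∃ A', A = x ::ₘ A' ∧ Γ = A' + Ω) ∨ (∃ Ω', Ω = x ::ₘ Ω' ∧ Γ = A + Ω') := by
  have hx : x ∈ A + Ω := by rw [← h]; exact Multiset.mem_cons_self x Γ
  rcases Multiset.mem_add.mp hx with hA | hO
  · obtain ⟨A', rfl⟩ := Multiset.exists_cons_of_mem hA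
    left
    refine ⟨A', rfl, ?_⟩
    have h2 : x ::ₘ Γ = x ::ₘ (A' + Ω) := by rw [h, Multiset.cons_add]
    exact (Multiset.cons_inj_right x).mp h2
  · obtain ⟨Ω', rfl⟩ := Multiset.exists_cons_of_mem hO
    right
    refine ⟨Ω', rfl, ?_⟩
    have h2 : x ::ₘ Γ = x ::ₘ (A + Ω') := by
      rw [h]
      simp only [← Multiset.singleton_add]
      abel
    exact (Multiset.cons_inj_right x).mp h2

lemma mset_zero_split {β : Type} {A Ω : Multiset β} (h : (0 : Multiset β) = A + Ω) :
    A = 0 ∧ Ω = 0 := by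
  constructor
  · have h2 : A ≤ 0 := by rw [h]; exact Multiset.le_add_right A Ω
    exact Multiset.le_zero.mp h2
  · have h2 : Ω ≤ 0 := by rw [h, add_comm]; exact Multiset.le_add_right Ω A
    exact Multiset.le_zero.mp h2

lemma mset_singleton_split {β : Type} {x : β} {A Ω : Multiset β}
    (h : ({x} : Multiset β) = A + Ω) :
    (A = {x} ∧ Ω = 0) ∨ (A = 0 ∧ Ω = {x}) := by
  have h' : x ::ₘ (0 : Multiset β) = A + Ω := by simpa using h
  rcases mset_cons_split h' with ⟨A', hA, h0⟩ | ⟨Ω', hO, h0⟩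
  · obtain ⟨h1, h2⟩ := mset_zero_split h0
    subst h1; subst h2
    left
    simp [hA]
  · obtain ⟨h1, h2⟩ := mset_zero_split h0
    subst h1; subst h2
    right
    simp [hO]

/-- A single-rule eliminator: trades any singleton-left proof for a left-empty proof,
paying `Z` on the right. -/
def SK (R : Set (Rule α)) (δ : α → ℤ) (a : Rule α) (Z : Multiset (RElem α)) : Prop :=
  ∀ W, Bsd R δ {a} W → Bsd R δ 0 (W + Z)

/-- A family of single-rule eliminators for each element of a multiset of rules. -/
inductive KF (R : Set (Rule α)) (δ : α → ℤ) :
    Multiset (Rule α) → Multiset (RElem α) → Prop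
  | nil : KF R δ 0 0
  | cons {a A Z1 Z2} : SK R δ a Z1 → KF R δ A Z2 → KF R δ (a ::ₘ A) (Z1 + Z2)

lemma KF.zero {R : Set (Rule α)} {δ : α → ℤ} {M : Multiset (Rule α)}
    {Z : Multiset (RElem α)} (h : KF R δ M Z) (hM : M = 0) : Z = 0 := by
  induction h with
  | nil => rfl
  | cons sk hk ih => exact absurd hM (Multiset.cons_ne_zero)

lemma KF.extract {R : Set (Rule α)} {δ : α → ℤ} {M : Multiset (Rule α)}
    {Z : Multiset (RElem α)} (h : KF R δ M Z) :
    ∀ a ∈ M, ∃ M' Z1 Z2, M = a ::ₘ M' ∧ SK R δ a Z1 ∧ KF R δ M' Z2 ∧ Z = Z1 + Z2 := by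
  induction h with
  | nil => intro a ha; simp at ha
  | @cons b A Zb ZA skb hkA ih =>
      intro a ha
      by_cases hab : a = b
      · subst hab
        exact ⟨A, Zb, ZA, rfl, skb, hkA, rfl⟩
      · have haA : a ∈ A := by
          rcases Multiset.mem_cons.mp ha with h1 | h1
          · exact absurd h1 hab
          · exact h1
        obtain ⟨A'', W1, W2, hA, sk, hk', hzz⟩ := ih a haA
        refine ⟨b ::ₘ A'', W1, Zb + W2, ?_, sk, KF.cons skb hk', ?_⟩
        · rw [hA, Multiset.cons_swap]
        · rw [hzz]; abel

lemma KF.cons_inv {R : Set (Rule α)} {δ : α → ℤ} {a : Rule α} {A : Multiset (Rule α)}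
    {Z : Multiset (RElem α)} (h : KF R δ (a ::ₘ A) Z) :
    ∃ Z1 Z2, SK R δ a Z1 ∧ KF R δ A Z2 ∧ Z = Z1 + Z2 := by
  obtain ⟨M', Z1, Z2, hM, sk, hk, hz⟩ := h.extract a (Multiset.mem_cons_self a A)
  have : A = M' := (Multiset.cons_inj_right a).mp hM
  subst this
  exact ⟨Z1, Z2, sk, hk, hz⟩

lemma KF.split {R : Set (Rule α)} {δ : α → ℤ} {Y : Multiset (Rule α)} :
    ∀ {X : Multiset (Rule α)} {Z : Multiset (RElem α)}, KF R δ (X + Y) Z →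
      ∃ Zx Zy, KF R δ X Zx ∧ KF R δ Y Zy ∧ Z = Zx + Zy := by
  intro X
  induction X using Multiset.induction with
  | empty =>
      intro Z h
      exact ⟨0, Z, KF.nil, by simpa using h, by simp⟩
  | cons a X' ih =>
      intro Z h
      rw [Multiset.cons_add] at h
      obtain ⟨Z1, Z2, sk, hk', hz⟩ := h.cons_inv
      obtain ⟨Zx', Zy, hkX', hkY, hz2⟩ := ih hk'
      exact ⟨Z1 + Zx', Zy, KF.cons sk hkX', hkY, by rw [hz, hz2]; abel⟩

lemma Bsd.cast {R : Set (Rule α)} {δ : α → ℤ} {Γ : Multiset (Rule α)}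
    {X Y : Multiset (RElem α)} (h : Bsd R δ Γ X) (e : X = Y) : Bsd R δ Γ Y := e ▸ h

end SingleDecide

section MainLemma

variable {α : Type}

/-- The key strengthened lemma: a `Bsd`-provable sequent whose left side splits into an
"active" part `A` (for which per-rule eliminators are available, at total cost `Z`) and a
"pending" part `Ω ⊆ R`, yields a left-empty `Bsd` proof of `Δ + Z`. -/
theorem Bsd.strengthen {R : Set (Rule α)} {δ : α → ℤ} :
    ∀ {Γt : Multiset (Rule α)} {Δt : Multiset (RElem α)}, Bsd R δ Γt Δt →
      ∀ A Ω Z, Γt = A + Ω → (∀ r ∈ Ω, r ∈ R) → KF R δ A Z →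
        Bsd R δ 0 (Δt + Z) := by
  intro Γt Δt h
  induction h with
  | rzero Γ Δ =>
      intro A Ω Z hs hΩ hk
      rw [Multiset.cons_add]
      exact Bsd.rzero 0 (Δ + Z)
  | @rplus Γ Δ E1 E2 h1 h2 ih1 ih2 =>
      intro A Ω Z hs hΩ hk
      rw [Multiset.cons_add]
      refine Bsd.rplus ?_ ?_
      · have O := ih1 A Ω Z hs hΩ hk; rwa [Multiset.cons_add] at O
      · have O := ih2 A Ω Z hs hΩ hk; rwa [Multiset.cons_add] at O
  | @rone Γ Δ h1 ih1 =>
      intro A Ω Z hs hΩ hk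
      rw [Multiset.cons_add]
      exact Bsd.rone (ih1 A Ω Z hs hΩ hk)
  | @rtimes Γ Δ E1 E2 h1 ih1 =>
      intro A Ω Z hs hΩ hk
      rw [Multiset.cons_add]
      refine Bsd.rtimes ?_
      have O := ih1 A Ω Z hs hΩ hk
      rwa [Multiset.cons_add, Multiset.cons_add] at O
  | lone =>
      intro A Ω Z hs hΩ hk
      rcases mset_singleton_split hs with ⟨hA, hO⟩ | ⟨hA, hO⟩
      · subst hA
        rw [← Multiset.cons_zero] at hk
        obtain ⟨Z1, Z2, sk, hk0, hz⟩ := hk.cons_inv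
        have hz0 := hk0.zero rfl
        exact (sk 0 Bsd.lone).cast (by rw [hz, hz0]; abel)
      · subst hA; subst hO
        have hz := hk.zero rfl
        have hm : Rule.one ∈ R := hΩ _ (Multiset.mem_singleton_self _)
        exact (Bsd.decide hm Bsd.lone).cast (by rw [hz]; simp)
  | @lplusL Γ Δ R1 R2 h1 ih1 =>
      intro A Ω Z hs hΩ hk
      rcases mset_cons_split hs with ⟨A', hA, hΓ⟩ | ⟨Ω', hO, hΓ⟩
      · subst hA
        obtain ⟨Z1, Z2, sk, hk', hz⟩ := hk.cons_inv
        have sk1 : SK R δ R1 Z1 := by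
          intro W P
          refine sk W ?_
          have q := Bsd.lplusL (Γ := 0) (R2 := R2) (by simpa using P)
          simpa using q
        have main := ih1 (R1 ::ₘ A') Ω (Z1 + Z2)
          (by rw [hΓ, Multiset.cons_add]) hΩ (KF.cons sk1 hk')
        exact main.cast (by rw [hz])
      · subst hO
        have hm : Rule.plus R1 R2 ∈ R := hΩ _ (Multiset.mem_cons_self _ _)
        have hΩ' : ∀ r ∈ Ω', r ∈ R := fun r hr => hΩ r (Multiset.mem_cons_of_mem hr)
        have sk1 : SK R δ R1 0 := by
          intro W P
          have q : Bsd R δ {Rule.plus R1 R2} W := by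
            have q0 := Bsd.lplusL (Γ := 0) (R2 := R2) (by simpa using P)
            simpa using q0
          exact (Bsd.decide hm q).cast (by simp)
        have main := ih1 (R1 ::ₘ A) Ω' (0 + Z)
          (by rw [hΓ, Multiset.cons_add]) hΩ' (KF.cons sk1 hk)
        exact main.cast (by simp)
  | @lplusR Γ Δ R1 R2 h1 ih1 =>
      intro A Ω Z hs hΩ hk
      rcases mset_cons_split hs with ⟨A', hA, hΓ⟩ | ⟨Ω', hO, hΓ⟩
      · subst hA
        obtain ⟨Z1, Z2, sk, hk', hz⟩ := hk.cons_inv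
        have sk1 : SK R δ R2 Z1 := by
          intro W P
          refine sk W ?_
          have q := Bsd.lplusR (Γ := 0) (R1 := R1) (by simpa using P)
          simpa using q
        have main := ih1 (R2 ::ₘ A') Ω (Z1 + Z2)
          (by rw [hΓ, Multiset.cons_add]) hΩ (KF.cons sk1 hk')
        exact main.cast (by rw [hz])
      · subst hO
        have hm : Rule.plus R1 R2 ∈ R := hΩ _ (Multiset.mem_cons_self _ _)
        have hΩ' : ∀ r ∈ Ω', r ∈ R := fun r hr => hΩ r (Multiset.mem_cons_of_mem hr)
        have sk1 : SK R δ R2 0 := by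
          intro W P
          have q : Bsd R δ {Rule.plus R1 R2} W := by
            have q0 := Bsd.lplusR (Γ := 0) (R1 := R1) (by simpa using P)
            simpa using q0
          exact (Bsd.decide hm q).cast (by simp)
        have main := ih1 (R2 ::ₘ A) Ω' (0 + Z)
          (by rw [hΓ, Multiset.cons_add]) hΩ' (KF.cons sk1 hk)
        exact main.cast (by simp)
  | @ltimes Γ1 Γ2 Δ1 Δ2 R1 R2 h1 h2 ih1 ih2 =>
      intro A Ω Z hs hΩ hk
      rcases mset_cons_split hs with ⟨A', hA, hΓ⟩ | ⟨Ω', hO, hΓ⟩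
      · subst hA
        obtain ⟨Zt, Zr, skt, hkr, hz⟩ := hk.cons_inv
        obtain ⟨A1, O1, A2, O2, e1, e2, e3, e4⟩ := mset_riesz hΓ
        subst e3
        obtain ⟨Za, Zb, hka, hkb, hzr⟩ := KF.split hkr
        have hΩ1 : ∀ r ∈ O1, r ∈ R := fun r hr =>
          hΩ r (by rw [e4]; exact Multiset.mem_add.mpr (Or.inl hr))
        have hΩ2 : ∀ r ∈ O2, r ∈ R := fun r hr =>
          hΩ r (by rw [e4]; exact Multiset.mem_add.mpr (Or.inr hr))
        have sk1 : SK R δ R1 (Δ2 + (Zt + Zb)) := by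
          intro W P1
          have sk2 : SK R δ R2 (W + Zt) := by
            intro V P2
            have q : Bsd R δ {Rule.times R1 R2} (W + V) := by
              have q0 := Bsd.ltimes (by simpa using P1 : Bsd R δ (R1 ::ₘ 0) W)
                (by simpa using P2 : Bsd R δ (R2 ::ₘ 0) V)
              simpa using q0
            exact (skt _ q).cast (by abel)
          have inner := ih2 (R2 ::ₘ A2) O2 ((W + Zt) + Zb)
            (by rw [e2, Multiset.cons_add]) hΩ2 (KF.cons sk2 hkb)
          exact inner.cast (by abel)
        have main := ih1 (R1 ::ₘ A1) O1 ((Δ2 + (Zt + Zb)) + Za)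
          (by rw [e1, Multiset.cons_add]) hΩ1 (KF.cons sk1 hka)
        exact main.cast (by rw [hz, hzr]; abel)
      · subst hO
        have hm : Rule.times R1 R2 ∈ R := hΩ _ (Multiset.mem_cons_self _ _)
        have hΩ'' : ∀ r ∈ Ω', r ∈ R := fun r hr => hΩ r (Multiset.mem_cons_of_mem hr)
        obtain ⟨A1, O1, A2, O2, e1, e2, e3, e4⟩ := mset_riesz hΓ
        subst e3
        obtain ⟨Za, Zb, hka, hkb, hzr⟩ := KF.split hk
        have hΩ1 : ∀ r ∈ O1, r ∈ R := fun r hr =>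
          hΩ'' r (by rw [e4]; exact Multiset.mem_add.mpr (Or.inl hr))
        have hΩ2 : ∀ r ∈ O2, r ∈ R := fun r hr =>
          hΩ'' r (by rw [e4]; exact Multiset.mem_add.mpr (Or.inr hr))
        have sk1 : SK R δ R1 (Δ2 + Zb) := by
          intro W P1
          have sk2 : SK R δ R2 W := by
            intro V P2
            have q : Bsd R δ {Rule.times R1 R2} (W + V) := by
              have q0 := Bsd.ltimes (by simpa using P1 : Bsd R δ (R1 ::ₘ 0) W)
                (by simpa using P2 : Bsd R δ (R2 ::ₘ 0) V)
              simpa using q0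
            exact (Bsd.decide hm q).cast (by abel)
          have inner := ih2 (R2 ::ₘ A2) O2 (W + Zb)
            (by rw [e2, Multiset.cons_add]) hΩ2 (KF.cons sk2 hkb)
          exact inner.cast (by abel)
        have main := ih1 (R1 ::ₘ A1) O1 ((Δ2 + Zb) + Za)
          (by rw [e1, Multiset.cons_add]) hΩ1 (KF.cons sk1 hka)
        exact main.cast (by rw [hzr]; abel)
  | @lmapsto Γ1 Γ2 Δ1 Δ2 R1 E h1 h2 ih1 ih2 =>
      intro A Ω Z hs hΩ hk
      rcases mset_cons_split hs with ⟨A', hA, hΓ⟩ | ⟨Ω', hO, hΓ⟩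
      · subst hA
        obtain ⟨Zm, Zr, skm, hkr, hz⟩ := hk.cons_inv
        obtain ⟨A1, O1, A2, O2, e1, e2, e3, e4⟩ := mset_riesz hΓ
        subst e3
        obtain ⟨Za, Zb, hka, hkb, hzr⟩ := KF.split hkr
        have hΩ1 : ∀ r ∈ O1, r ∈ R := fun r hr =>
          hΩ r (by rw [e4]; exact Multiset.mem_add.mpr (Or.inl hr))
        have hΩ2 : ∀ r ∈ O2, r ∈ R := fun r hr =>
          hΩ r (by rw [e4]; exact Multiset.mem_add.mpr (Or.inr hr))
        have sk1 : SK R δ R1 (Δ2 + (Zm + Zb)) := by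
          intro W P1
          have O := ih2 A2 O2 Zb e2 hΩ2 hkb
          rw [Multiset.cons_add] at O
          have q : Bsd R δ {Rule.mapsto R1 E} (W + (Δ2 + Zb)) := by
            have q0 := Bsd.lmapsto (by simpa using P1 : Bsd R δ (R1 ::ₘ 0) W) (Γ2 := 0) O
            simpa using q0
          exact (skm _ q).cast (by abel)
        have main := ih1 (R1 ::ₘ A1) O1 ((Δ2 + (Zm + Zb)) + Za)
          (by rw [e1, Multiset.cons_add]) hΩ1 (KF.cons sk1 hka)
        exact main.cast (by rw [hz, hzr]; abel)
      · subst hO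
        have hm : Rule.mapsto R1 E ∈ R := hΩ _ (Multiset.mem_cons_self _ _)
        have hΩ'' : ∀ r ∈ Ω', r ∈ R := fun r hr => hΩ r (Multiset.mem_cons_of_mem hr)
        obtain ⟨A1, O1, A2, O2, e1, e2, e3, e4⟩ := mset_riesz hΓ
        subst e3
        obtain ⟨Za, Zb, hka, hkb, hzr⟩ := KF.split hk
        have hΩ1 : ∀ r ∈ O1, r ∈ R := fun r hr =>
          hΩ'' r (by rw [e4]; exact Multiset.mem_add.mpr (Or.inl hr))
        have hΩ2 : ∀ r ∈ O2, r ∈ R := fun r hr =>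
          hΩ'' r (by rw [e4]; exact Multiset.mem_add.mpr (Or.inr hr))
        have sk1 : SK R δ R1 (Δ2 + Zb) := by
          intro W P1
          have O := ih2 A2 O2 Zb e2 hΩ2 hkb
          rw [Multiset.cons_add] at O
          have q : Bsd R δ {Rule.mapsto R1 E} (W + (Δ2 + Zb)) := by
            have q0 := Bsd.lmapsto (by simpa using P1 : Bsd R δ (R1 ::ₘ 0) W) (Γ2 := 0) O
            simpa using q0
          exact Bsd.decide hm q
        have main := ih1 (R1 ::ₘ A1) O1 ((Δ2 + Zb) + Za)
          (by rw [e1, Multiset.cons_add]) hΩ1 (KF.cons sk1 hka)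
        exact main.cast (by rw [hzr]; abel)
  | @lbigMapsto Γ Δ Υ R1 E hU h1 h2 ih1 ih2 =>
      intro A Ω Z hs hΩ hk
      rcases mset_cons_split hs with ⟨A', hA, hΓ⟩ | ⟨Ω', hO, hΓ⟩
      · subst hA
        obtain ⟨Zb', Z', skb, hk', hz⟩ := hk.cons_inv
        have O := ih2 A' Ω Z' hΓ hΩ hk'
        rw [Multiset.cons_add] at O
        have q : Bsd R δ {Rule.bigMapsto R1 E} (Υ + (Δ + Z')) := by
          have q0 := Bsd.lbigMapsto (Γ := 0) hU h1 O
          simpa using q0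
        exact (skb _ q).cast (by rw [hz]; abel)
      · subst hO
        have hm : Rule.bigMapsto R1 E ∈ R := hΩ _ (Multiset.mem_cons_self _ _)
        have hΩ' : ∀ r ∈ Ω', r ∈ R := fun r hr => hΩ r (Multiset.mem_cons_of_mem hr)
        have O := ih2 A Ω' Z hΓ hΩ' hk
        rw [Multiset.cons_add] at O
        have q : Bsd R δ {Rule.bigMapsto R1 E} (Υ + (Δ + Z)) := by
          have q0 := Bsd.lbigMapsto (Γ := 0) hU h1 O
          simpa using q0
        exact (Bsd.decide hm q).cast (by abel)
  | @decide r Δ hr h1 ih1 =>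
      intro A Ω Z hs hΩ hk
      obtain ⟨hA, hO⟩ := mset_zero_split hs
      subst hA
      have hz := hk.zero rfl
      have main := ih1 0 {r} 0 (by simp)
        (by intro x hx; rw [Multiset.mem_singleton] at hx; subst hx; exact hr) KF.nil
      exact main.cast (by rw [hz])
  | @debit1 Γ Δ A0 hd h1 ih1 =>
      intro A Ω Z hs hΩ hk
      rcases mset_cons_split hs with ⟨A', hA, hΓ⟩ | ⟨Ω', hO, hΓ⟩
      · subst hA
        obtain ⟨Z1, Z2, ska, hk', hz⟩ := hk.cons_inv
        have O := ih1 A' Ω Z2 hΓ hΩ hk'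
        rw [Multiset.cons_add] at O
        have P : Bsd R δ {Rule.atom A0} (Δ + Z2) := by
          have q0 := Bsd.debit1 (Γ := 0) hd O
          simpa using q0
        exact (ska _ P).cast (by rw [hz]; abel)
      · subst hO
        have hm : Rule.atom A0 ∈ R := hΩ _ (Multiset.mem_cons_self _ _)
        have hΩ' : ∀ r ∈ Ω', r ∈ R := fun r hr => hΩ r (Multiset.mem_cons_of_mem hr)
        have O := ih1 A Ω' Z hΓ hΩ' hk
        rw [Multiset.cons_add] at O
        have P : Bsd R δ {Rule.atom A0} (Δ + Z) := by
          have q0 := Bsd.debit1 (Γ := 0) hd O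
          simpa using q0
        exact Bsd.decide hm P
  | @debit2 Υ A0 hd hU h1 ih1 =>
      intro A Ω Z hs hΩ hk
      rcases mset_singleton_split hs with ⟨hA, hO⟩ | ⟨hA, hO⟩
      · subst hA
        rw [← Multiset.cons_zero] at hk
        obtain ⟨Z1, Z2, ska, hk0, hz⟩ := hk.cons_inv
        have hz0 := hk0.zero rfl
        exact (ska _ (Bsd.debit2 hd hU h1)).cast (by rw [hz, hz0]; abel)
      · subst hA; subst hO
        have hz := hk.zero rfl
        have hm : Rule.atom A0 ∈ R := hΩ _ (Multiset.mem_singleton_self _)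
        exact (Bsd.decide hm (Bsd.debit2 hd hU h1)).cast (by rw [hz]; simp)
  | @init E =>
      intro A Ω Z hs hΩ hk
      rcases mset_singleton_split hs with ⟨hA, hO⟩ | ⟨hA, hO⟩
      · subst hA
        rw [← Multiset.cons_zero] at hk
        obtain ⟨Z1, Z2, sk, hk0, hz⟩ := hk.cons_inv
        have hz0 := hk0.zero rfl
        exact (sk _ Bsd.init).cast (by rw [hz, hz0]; abel)
      · subst hA; subst hO
        have hz := hk.zero rfl
        have hm : E.toRule ∈ R := hΩ _ (Multiset.mem_singleton_self _)
        exact (Bsd.decide hm Bsd.init).cast (by rw [hz]; simp)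
  | @initd A0 =>
      intro A Ω Z hs hΩ hk
      obtain ⟨hA, hO⟩ := mset_zero_split hs
      subst hA
      have hz := hk.zero rfl
      exact (Bsd.initd (R := R) (δ := δ) (A := A0)).cast (by rw [hz]; simp)
  | @contrR Γ Δ S0 hS h1 ih1 =>
      intro A Ω Z hs hΩ hk
      have O := ih1 A Ω Z hs hΩ hk
      rw [Multiset.cons_add, Multiset.cons_add] at O
      rw [Multiset.cons_add]
      exact Bsd.contrR hS O
  | @weakR Γ Δ S0 hS h1 ih1 =>
      intro A Ω Z hs hΩ hk
      have O := ih1 A Ω Z hs hΩ hk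
      rw [Multiset.cons_add]
      exact Bsd.weakR hS O

/-- Multi-decide is admissible in `Bsd`. -/
theorem Bsd.multi_decide {R : Set (Rule α)} {δ : α → ℤ} {Γ : Multiset (Rule α)}
    {Δ : Multiset (RElem α)} (h : Bsd R δ Γ Δ) (hΓ : ∀ r ∈ Γ, r ∈ R) : Bsd R δ 0 Δ := by
  have main := Bsd.strengthen h 0 Γ 0 (by simp) hΓ KF.nil
  simpa using main

/-- Every `B` proof is simulated by a `Bsd` proof. -/
theorem B.to_Bsd {R : Set (Rule α)} {δ : α → ℤ} {Γ : Multiset (Rule α)}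
    {Δ : Multiset (RElem α)} (h : B R δ Γ Δ) : Bsd R δ Γ Δ := by
  induction h with
  | rzero Γ Δ => exact Bsd.rzero Γ Δ
  | @rplus Γ Δ E1 E2 h1 h2 ih1 ih2 => exact Bsd.rplus ih1 ih2
  | @rone Γ Δ h1 ih1 => exact Bsd.rone ih1
  | @rtimes Γ Δ E1 E2 h1 ih1 => exact Bsd.rtimes ih1
  | lone => exact Bsd.lone
  | @lplusL Γ Δ R1 R2 h1 ih1 => exact Bsd.lplusL ih1
  | @lplusR Γ Δ R1 R2 h1 ih1 => exact Bsd.lplusR ih1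
  | @ltimes Γ1 Γ2 Δ1 Δ2 R1 R2 h1 h2 ih1 ih2 => exact Bsd.ltimes ih1 ih2
  | @lmapsto Γ1 Γ2 Δ1 Δ2 R1 E h1 h2 ih1 ih2 => exact Bsd.lmapsto ih1 ih2
  | @lbigMapsto Γ Δ Υ R1 E hU h1 h2 ih1 ih2 => exact Bsd.lbigMapsto hU ih1 ih2
  | @decide Γ Δ hne hmem h1 ih1 => exact Bsd.multi_decide ih1 hmem
  | @debit1 Γ Δ A0 hd h1 ih1 => exact Bsd.debit1 hd ih1
  | @debit2 Υ A0 hd hU h1 ih1 => exact Bsd.debit2 hd hU ih1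
  | @init E => exact Bsd.init
  | @initd A0 => exact Bsd.initd
  | @contrR Γ Δ S0 hS h1 ih1 => exact Bsd.contrR hS ih1
  | @weakR Γ Δ S0 hS h1 ih1 => exact Bsd.weakR hS ih1

end MainLemma

/-- Completeness of single-decide proofs: a `B`-provable sequent `⊢ Δ` has a
single-decide `B`-proof. -/
theorem complete_single_decide {α : Type} (R : Set (Rule α)) (δ : α → ℤ)
    (hδ : BiasOK δ) (Δ : Multiset (RElem α)) :
    B R δ 0 Δ → Bsd R δ 0 Δ := by
  intro h
  exact B.to_Bsd h
end

section
/- Multiset rewriting soundness and completeness of the small sequent system: for multisets M, M1, M2 of atoms, the sequent (M1 ↦ M2) ⊢ M has a derivation from the open premise ⊢ N (using right rules for 1 and ×, init, left rules for 1, ×, and ↦) if and only if there is a multiset M'' with M = M1 ⊎ M'' and N = M2 ⊎ M''. -/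
/-- Expressions of the small system: atoms, the unit `1`, and `×`. -/
inductive SE (α : Type) : Type
  | atom : α → SE α
  | one : SE α
  | times : SE α → SE α → SE α

/-- The multiset of atoms represented by an expression. -/
def SE.toMS {α : Type} : SE α → Multiset α
  | .atom a => {a}
  | .one => 0
  | .times e1 e2 => e1.toMS + e2.toMS

/-- Left-hand formulas of the small system: expressions and rewrite rules
`E1 ↦ E2`. -/
inductive SR (α : Type) : Type
  | expr : SE α → SR α
  | mapsto : SE α → SE α → SR α

/-- Derivability in the small sequent system, from the open premise `⊢ N`
(for `N` a multiset of atoms).  The left-hand side holds at most one formula. -/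
inductive SDer {α : Type} (N : Multiset α) : Option (SR α) → Multiset (SE α) → Prop
  /-- The open premise `⊢ N`. -/
  | hyp : SDer N none (N.map SE.atom)
  /-- Right rule for `1`. -/
  | rone {Δ} : SDer N none Δ → SDer N none (.one ::ₘ Δ)
  /-- Right rule for `×`. -/
  | rtimes {Δ E1 E2} : SDer N none (E1 ::ₘ E2 ::ₘ Δ) →
      SDer N none ((E1.times E2) ::ₘ Δ)
  /-- The `init` rule `E ⊢ E`. -/
  | init {E} : SDer N (some (.expr E)) {E}
  /-- Left rule for `1`, with empty right-hand side. -/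
  | lone : SDer N (some (.expr .one)) 0
  /-- Left rule for `×`. -/
  | ltimes {E1 E2 Δ1 Δ2} : SDer N (some (.expr E1)) Δ1 →
      SDer N (some (.expr E2)) Δ2 →
      SDer N (some (.expr (E1.times E2))) (Δ1 + Δ2)
  /-- Left rule for `↦`. -/
  | lmapsto {E1 E2 Δ1 Δ2} : SDer N (some (.expr E1)) Δ1 →
      SDer N none (E2 ::ₘ Δ2) →
      SDer N (some (.mapsto E1 E2)) (Δ1 + Δ2)

/-!
Read a sequent through the multiset of atoms of its right-hand side (summing `toMS`): every
derivation of `E ⊢ Δ` reads `E.toMS`, and every derivation of `⊢ Δ` from the premise `⊢ N` reads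
`N`. A derivation of `(E1 ↦ E2) ⊢ M` must end with the `↦` rule, so it splits `M` as `M1 + M''`
with `M''` read off `Δ2`, and then `⊢ E2, Δ2` reads `N = M2 + M''`. Conversely, `E1 ⊢ M1` comes
from `init` on atoms and the left rules, and `⊢ E2, M''` from `⊢ M2 + M''` by the right rules.
-/

namespace SE

variable {α : Type}

@[simp] theorem toMS_atom (a : α) : (atom a).toMS = {a} := rfl
@[simp] theorem toMS_one : (one : SE α).toMS = 0 := rfl
@[simp] theorem toMS_times (E1 E2 : SE α) : (E1.times E2).toMS = E1.toMS + E2.toMS := rfl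

theorem sum_toMS_map_atom (M : Multiset α) : ((M.map atom).map toMS).sum = M := by
  simp [Multiset.map_map, Function.comp_def]

end SE

namespace SDer

variable {α : Type} {N : Multiset α}

theorem sum_toMS_of_expr {E : SE α} {Δ : Multiset (SE α)} (h : SDer N (some (.expr E)) Δ) :
    (Δ.map SE.toMS).sum = E.toMS := by
  induction E generalizing Δ with
  | atom a => cases h; simp
  | one => cases h <;> simp
  | times E1 E2 ih1 ih2 =>
    cases h with
    | init => simp
    | ltimes h1 h2 => simp [ih1 h1, ih2 h2]

theorem sum_toMS_of_none {Δ : Multiset (SE α)} (h : SDer N none Δ) :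
    (Δ.map SE.toMS).sum = N := by
  generalize ho : (none : Option (SR α)) = o at h
  induction h with
  | hyp => exact SE.sum_toMS_map_atom N
  | rone _ ih => simp [ih ho]
  | rtimes _ ih => simpa [add_assoc] using ih ho
  | init | lone | ltimes | lmapsto => cases ho

theorem expr_toMS (N : Multiset α) (E : SE α) :
    SDer N (some (.expr E)) (E.toMS.map SE.atom) := by
  induction E with
  | atom a => exact init
  | one => exact lone
  | times E1 E2 ih1 ih2 => simpa using ltimes ih1 ih2

theorem cons_of_toMS_add {E : SE α} {Δ : Multiset (SE α)}
    (h : SDer N none (E.toMS.map SE.atom + Δ)) : SDer N none (E ::ₘ Δ) := by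
  induction E generalizing Δ with
  | atom a => simpa using h
  | one => exact rone (by simpa using h)
  | times E1 E2 ih1 ih2 =>
    refine rtimes (ih1 ?_)
    rw [Multiset.add_cons]
    refine ih2 ?_
    simpa [add_assoc, add_left_comm] using h

end SDer

/-- Soundness and completeness of the small sequent system for multiset
rewriting: for multisets `M, M1, M2` of atoms, the sequent `(M1 ↦ M2) ⊢ M`
has a derivation from the open premise `⊢ N` iff there is a multiset `M''`
with `M = M1 ⊎ M''` and `N = M2 ⊎ M''`. -/
theorem small_system_rewrites {α : Type} (M M1 M2 N : Multiset α)
    (E1 E2 : SE α) (h1 : E1.toMS = M1) (h2 : E2.toMS = M2) :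
    SDer N (some (SR.mapsto E1 E2)) (M.map SE.atom) ↔
      ∃ M'' : Multiset α, M = M1 + M'' ∧ N = M2 + M'' := by
  subst h1 h2
  constructor
  · intro h
    generalize hΔ : M.map SE.atom = Δ at h
    cases h with
    | @lmapsto _ _ Δ1 Δ2 hd1 hd2 =>
      refine ⟨(Δ2.map SE.toMS).sum, ?_, ?_⟩
      · calc M = ((M.map SE.atom).map SE.toMS).sum := (SE.sum_toMS_map_atom M).symm
          _ = ((Δ1 + Δ2).map SE.toMS).sum := by rw [hΔ]
          _ = E1.toMS + (Δ2.map SE.toMS).sum := by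
            rw [Multiset.map_add, Multiset.sum_add, hd1.sum_toMS_of_expr]
      · simpa using hd2.sum_toMS_of_none.symm
  · rintro ⟨M'', rfl, rfl⟩
    have hd2 : SDer (E2.toMS + M'') none (E2 ::ₘ M''.map SE.atom) :=
      .cons_of_toMS_add (by simpa only [← Multiset.map_add] using SDer.hyp)
    simpa using SDer.lmapsto (SDer.expr_toMS _ E1) hd2
end

section
/- If a sequent ⊢ Δ is B-provable under a bias assignment δ, and δ' agrees with δ except that some atoms with δ-value −1 are assigned −2 by δ', then ⊢ Δ is B-provable under δ'. Consequently, intuitionistic sequent provability (with δ(rght)=−1) implies classical sequent provability (with δ(rght)=−2) for the encoding of Section 5. -/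
/-- Monotonicity of bias assignments: if `δ'` agrees with `δ` except that some
atoms with `δ`-value `−1` are assigned `−2` by `δ'`, then every `B`-provable
sequent `⊢ Δ` under `δ` is `B`-provable under `δ'`.  (Consequently,
intuitionistic sequent provability implies classical sequent provability for
the encoding of Section 5.) -/
theorem bias_monotone {α : Type} (R : Set (Rule α)) (δ δ' : α → ℤ)
    (hδ : BiasOK δ) (hδ' : BiasOK δ')
    (h : ∀ a, δ' a = δ a ∨ (δ a = -1 ∧ δ' a = -2))
    (Δ : Multiset (RElem α)) :
    B R δ 0 Δ → B R δ' 0 Δ := by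
  have hcl : ∀ a, InClassical δ a → InClassical δ' a := by
    intro a ha
    rcases h a with h1 | ⟨h1, h2⟩
    · rcases ha with ha | ha
      · exact Or.inl (h1.trans ha)
      · exact Or.inr (h1.trans ha)
    · rcases ha with ha | ha <;> omega
  have hups : ∀ Υ, Ups δ Υ → Ups δ' Υ := by
    intro Υ hU x hx
    obtain ⟨a, hxa, hc⟩ := hU x hx
    exact ⟨a, hxa, hcl a hc⟩
  have key : ∀ Γ Δ, B R δ Γ Δ → B R δ' Γ Δ := by
    intro Γ Δ hd
    induction hd with
    | rzero Γ Δ => exact .rzero Γ Δ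
    | rplus _ _ ih1 ih2 => exact .rplus ih1 ih2
    | rone _ ih => exact .rone ih
    | rtimes _ ih => exact .rtimes ih
    | lone => exact .lone
    | lplusL _ ih => exact .lplusL ih
    | lplusR _ ih => exact .lplusR ih
    | ltimes _ _ ih1 ih2 => exact .ltimes ih1 ih2
    | lmapsto _ _ ih1 ih2 => exact .lmapsto ih1 ih2
    | lbigMapsto hU _ _ ih1 ih2 => exact .lbigMapsto (hups _ hU) ih1 ih2
    | decide hne hmem _ ih => exact .decide hne hmem ih
    | @debit1 _ _ A hA _ ih =>
      refine .debit1 ?_ ih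
      rcases h A with h1 | ⟨h1, h2⟩ <;> omega
    | @debit2 _ A hA hU _ ih =>
      refine .debit2 ?_ (hups _ hU) ih
      rcases h A with h1 | ⟨h1, h2⟩ <;> omega
    | init => exact .init
    | initd => exact .initd
    | contrR hc _ ih => exact .contrR (hcl _ hc) ih
    | weakR hc _ ih => exact .weakR (hcl _ hc) ih
  exact key 0 Δ
end
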